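/- Let Y be a W-stable lattice with Q^∨ ⊆ Y ⊆ P^∨, Ω_Y ≤ Ω the corresponding subgroup, F the Komrakov–Premet polytope, and F_Y := ⋃_{[ω] ∈ Ω/Ω_Y} ω F for any choice of coset representatives. If λ, λ' ∈ F_Y and λ − λ' ∈ Y, then λ = λ'. -/

import Mathlib

open scoped RealInnerProductSpace Pointwise

noncomputable section

variable (E : Type) [NormedAddCommGroup E] [InnerProductSpace ℝ E] [FiniteDimensional ℝ E]

/-- The coroot `x^∨ = 2x/⟪x,x⟫` of a vector, under the identification of `V` with `V*`
via the inner product. -/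
def coroot (x : E) : E := (2 / ⟪x, x⟫) • x

/-- Data of an irreducible reduced root system `Φ` in a Euclidean space `E`,
together with a system of simple roots `α i`, the highest root `α₀` with its coefficients
`n i`, and the fundamental coweights `ϖ i`. -/
structure KPData (r : ℕ) where
  Φ : Finset E
  Φ_nonempty : Φ.Nonempty
  root_ne_zero : ∀ x ∈ Φ, x ≠ (0 : E)
  span_eq_top : Submodule.span ℝ (Φ : Set E) = ⊤
  reduced : ∀ x ∈ Φ, ∀ t : ℝ, t • x ∈ Φ → t = 1 ∨ t = -1
  integrality : ∀ x ∈ Φ, ∀ y ∈ Φ, ∃ m : ℤ, ⟪coroot E x, y⟫ = (m : ℝ)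
  reflect_mem : ∀ x ∈ Φ, ∀ y ∈ Φ, y - ⟪coroot E x, y⟫ • x ∈ Φ
  irreducible : ∀ S ⊆ (Φ : Set E), (∀ x ∈ S, ∀ y ∈ (Φ : Set E) \ S, ⟪x, y⟫ = 0) →
    S = ∅ ∨ S = (Φ : Set E)
  α : Fin r → E
  α_mem : ∀ i, α i ∈ Φ
  α_indep : LinearIndependent ℝ α
  pos_or_neg : ∀ x ∈ Φ, (∃ c : Fin r → ℝ, (∀ i, 0 ≤ c i) ∧ x = ∑ i, c i • α i) ∨
    (∃ c : Fin r → ℝ, (∀ i, 0 ≤ c i) ∧ x = -∑ i, c i • α i)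
  ϖ : Fin r → E
  ϖ_pair : ∀ i j, ⟪ϖ i, α j⟫ = if i = j then 1 else 0
  n : Fin r → ℕ
  n_pos : ∀ i, 0 < n i
  α₀ : E
  α₀_mem : α₀ ∈ Φ
  α₀_eq : α₀ = ∑ i, (n i : ℝ) • α i
  α₀_highest : ∀ x ∈ Φ, ∃ c : Fin r → ℝ, (∀ i, 0 ≤ c i) ∧ α₀ - x = ∑ i, c i • α i

namespace KPData

variable {E} {r : ℕ} (D : KPData E r)

/-- The set of positive roots. -/
def posRoots : Set E :=
  {x ∈ (D.Φ : Set E) | ∃ c : Fin r → ℝ, (∀ i, 0 ≤ c i) ∧ x = ∑ i, c i • D.α i}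

/-- The closed fundamental alcove `𝒜₀`. -/
def alcove : Set E := {l | (∀ i, 0 ≤ ⟪l, D.α i⟫) ∧ ⟪l, D.α₀⟫ ≤ 1}

/-- The closed fundamental Weyl chamber `𝒞₀`. -/
def chamber : Set E := {l | ∀ i, 0 ≤ ⟪l, D.α i⟫}

/-- The coroot lattice `Q^∨ = ℤΦ^∨`. -/
def corootLattice : AddSubgroup E := AddSubgroup.closure (coroot E '' (D.Φ : Set E))

/-- The root lattice `Q = ℤΦ`. -/
def rootLattice : AddSubgroup E := AddSubgroup.closure (D.Φ : Set E)

/-- The coweight lattice `P^∨`, spanned by the fundamental coweights. -/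
def coweightLattice : AddSubgroup E := AddSubgroup.closure (Set.range D.ϖ)

/-- The weight lattice `P`. -/
def weightLattice : AddSubgroup E where
  carrier := {x | ∀ y ∈ D.Φ, ∃ m : ℤ, ⟪coroot E y, x⟫ = (m : ℝ)}
  zero_mem' := fun y _ => ⟨0, by simp⟩
  add_mem' := by
    rintro a b ha hb y hy
    obtain ⟨m, hm⟩ := ha y hy
    obtain ⟨m', hm'⟩ := hb y hy
    exact ⟨m + m', by rw [inner_add_right, hm, hm']; push_cast; ring⟩
  neg_mem' := by
    rintro a ha y hy
    obtain ⟨m, hm⟩ := ha y hy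
    exact ⟨-m, by rw [inner_neg_right, hm]; push_cast; ring⟩

/-- The reflection in the hyperplane orthogonal to `x`, as an affine automorphism. -/
def refl (x : E) : E ≃ᵃ[ℝ] E :=
  ((Submodule.reflection (ℝ ∙ x)ᗮ).toLinearEquiv).toAffineEquiv

/-- Translation by a vector, as an affine automorphism. -/
def transl (v : E) : E ≃ᵃ[ℝ] E := AffineEquiv.constVAdd ℝ E v

/-- The finite Weyl group `W`, realized as a group of affine automorphisms. -/
def weylGroup : Subgroup (E ≃ᵃ[ℝ] E) :=
  Subgroup.closure {f | ∃ x ∈ D.Φ, f = refl x}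

/-- The intermediate affine Weyl group `W_Λ = Λ ⋊ W` attached to a lattice `Λ`. -/
def affWeylOf (Λ : AddSubgroup E) : Subgroup (E ≃ᵃ[ℝ] E) :=
  Subgroup.closure ({f | ∃ v ∈ Λ, f = transl v} ∪ {f | ∃ x ∈ D.Φ, f = refl x})

/-- The affine Weyl group `W_a = Q^∨ ⋊ W`. -/
def affWeyl : Subgroup (E ≃ᵃ[ℝ] E) := D.affWeylOf D.corootLattice

/-- The extended affine Weyl group `Ŵ_a = P^∨ ⋊ W`. -/
def extAffWeyl : Subgroup (E ≃ᵃ[ℝ] E) := D.affWeylOf D.coweightLattice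

/-- The stabilizer `Ω` of the fundamental alcove in the extended affine Weyl group. -/
def alcoveStab : Subgroup (E ≃ᵃ[ℝ] E) where
  carrier := {f | f ∈ D.extAffWeyl ∧ f '' D.alcove = D.alcove}
  one_mem' := ⟨one_mem _, by simp [AffineEquiv.coe_one, Set.image_id]⟩
  mul_mem' := by
    rintro a b ⟨ha, ha'⟩ ⟨hb, hb'⟩
    exact ⟨mul_mem ha hb, by rw [AffineEquiv.coe_mul, Set.image_comp, hb', ha']⟩
  inv_mem' := by
    rintro f ⟨hf, hf'⟩
    refine ⟨inv_mem hf, ?_⟩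
    conv_lhs => rw [← hf']
    rw [show ⇑(f⁻¹) = ⇑f.symm from rfl, ← Set.image_comp]
    simp [Function.comp_def]

/-- The Komrakov–Premet polytope `F`. -/
def KP : Set E :=
  {l ∈ D.alcove | ∀ i, D.n i = 1 → ⟪l, D.α₀ + D.α i⟫ ≤ 1}

/-- A closed, connected fundamental domain for a group of affine transformations. -/
def IsFundDom (G : Subgroup (E ≃ᵃ[ℝ] E)) (F : Set E) : Prop :=
  IsClosed F ∧ IsConnected F ∧ (⋃ g ∈ G, (g : E ≃ᵃ[ℝ] E) '' F) = Set.univ ∧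
    ∀ g ∈ G, g ≠ 1 → interior ((g : E ≃ᵃ[ℝ] E) '' F ∩ F) = ∅

/-- The length of a Weyl group element: the number of positive roots sent to negative roots. -/
def len (w : E ≃ᵃ[ℝ] E) : ℕ :=
  Nat.card {x : E // x ∈ D.posRoots ∧ w x ∈ Neg.neg '' D.posRoots}

end KPData

open KPData

variable {E} {r : ℕ}

set_option linter.unusedSectionVars false
namespace KPData

variable (D : KPData E r)

/-- A `W`-stable lattice between the coroot lattice and the coweight lattice. -/
def IsWLattice (Λ : AddSubgroup E) : Prop :=
  D.corootLattice ≤ Λ ∧ Λ ≤ D.coweightLattice ∧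
    ∀ w ∈ D.weylGroup, ∀ x ∈ Λ, (w : E ≃ᵃ[ℝ] E) x ∈ Λ

/-- The subgroup `Ω_Λ = π(Λ ⋊ W)` of `Ω` attached to a `W`-lattice `Λ`; since
`W_a ≤ Λ ⋊ W` and `Ŵ_a = W_a ⋊ Ω`, it coincides with `(Λ ⋊ W) ∩ Ω`. -/
def OmegaOf (Λ : AddSubgroup E) : Subgroup (E ≃ᵃ[ℝ] E) :=
  D.affWeylOf Λ ⊓ D.alcoveStab

lemma transl_add (a b : E) : (transl (a + b) : E ≃ᵃ[ℝ] E) = transl a * transl b := by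
  show AffineEquiv.constVAdd ℝ E (a + b) = _
  rw [AffineEquiv.constVAdd_add]
  rfl

lemma transl_neg (a : E) : (transl (-a) : E ≃ᵃ[ℝ] E) = (transl a)⁻¹ := by
  show AffineEquiv.constVAdd ℝ E (-a) = _
  rw [← AffineEquiv.constVAdd_symm]
  rfl

lemma transl_zero : (transl (0 : E) : E ≃ᵃ[ℝ] E) = 1 := by
  show AffineEquiv.constVAdd ℝ E 0 = _
  rw [AffineEquiv.constVAdd_zero]
  rfl

/-- The `W`-lattice `π⁻¹(H) ∩ P^∨` attached to a subgroup `H` of `Ω`; since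
`π⁻¹(H) = W_a · H`, a coweight `v` belongs to it iff `t_v ∈ W_a ⊔ H`. -/
def latticeOf (H : Subgroup (E ≃ᵃ[ℝ] E)) : AddSubgroup E where
  carrier := {v | v ∈ D.coweightLattice ∧ (transl v : E ≃ᵃ[ℝ] E) ∈ D.affWeyl ⊔ H}
  zero_mem' := ⟨zero_mem _, by rw [transl_zero]; exact one_mem _⟩
  add_mem' := by
    rintro a b ⟨ha, ha'⟩ ⟨hb, hb'⟩
    exact ⟨add_mem ha hb, by rw [transl_add]; exact mul_mem ha' hb'⟩
  neg_mem' := by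
    rintro a ⟨ha, ha'⟩
    exact ⟨neg_mem ha, by rw [transl_neg]; exact inv_mem ha'⟩

end KPData

/-!
Two points of the fundamental alcove whose difference lies in `P^∨` either coincide or are both
vertices of the alcove lying in `P^∨`: a nonzero integral difference of coordinates
`⟪·, α j⟫ ∈ [0, 1]` puts one of them on the wall `⟪x, α j⟫ = 1`, which pins it to `ϖ j`.
In the second case write `λ = ρ μ`, `λ' = ρ' μ'` with `μ, μ' ∈ F`. Since `Ŵ_a = P^∨ ⋊ W`
preserves `P^∨`, also `μ, μ'` are such vertices, and the only one in `F` is `0`. Hence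
`ρ = t_λ w` and `ρ' = t_λ' w'` with `w, w' ∈ W`, so `ρ'⁻¹ ρ = w'⁻¹ t_{λ - λ'} w ∈ Ω_Y`; as `R`
contains one representative per coset, `ρ = ρ'` and `λ = ρ 0 = λ'`.
-/

namespace KPData

variable (D : KPData E r)

section Reflections

lemma inner_coroot_self {x : E} (hx : x ≠ 0) : ⟪coroot E x, x⟫ = 2 := by
  have : ⟪x, x⟫ ≠ (0 : ℝ) := inner_self_ne_zero.mpr hx
  rw [coroot, real_inner_smul_left]
  field_simp

lemma refl_apply (x y : E) : refl x y = y - ⟪coroot E x, y⟫ • x := by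
  change Submodule.reflection (ℝ ∙ x)ᗮ y = _
  rw [Submodule.reflection_apply, Submodule.starProjection_orthogonal_val,
    Submodule.starProjection_singleton, coroot, real_inner_smul_left,
    real_inner_self_eq_norm_sq, RCLike.ofReal_real_eq_id, id]
  match_scalars <;> ring

lemma refl_refl (x y : E) : refl x (refl x y) = y :=
  Submodule.reflection_reflection _ y

lemma inner_refl_left (x v y : E) : ⟪refl x v, y⟫ = ⟪v, refl x y⟫ := by
  conv_lhs => rw [← refl_refl x y]
  exact (Submodule.reflection (ℝ ∙ x)ᗮ).inner_map_map v (refl x y)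

lemma neg_mem_Φ {x : E} (hx : x ∈ D.Φ) : -x ∈ D.Φ := by
  have h := D.reflect_mem x hx x hx
  rwa [inner_coroot_self (D.root_ne_zero x hx), two_smul, sub_add_cancel_left] at h

lemma refl_mem_Φ {x y : E} (hx : x ∈ D.Φ) (hy : y ∈ D.Φ) : refl x y ∈ D.Φ := by
  rw [refl_apply]
  exact D.reflect_mem x hx y hy

end Reflections

section SimpleRoots

lemma span_range_α : Submodule.span ℝ (Set.range D.α) = ⊤ := by
  refine top_unique (D.span_eq_top ▸ Submodule.span_le.mpr fun x hx => ?_)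
  have hsum : ∀ c : Fin r → ℝ, ∑ i, c i • D.α i ∈ Submodule.span ℝ (Set.range D.α) :=
    fun c => Submodule.sum_mem _ fun i _ => Submodule.smul_mem _ _ (Submodule.subset_span ⟨i, rfl⟩)
  rcases D.pos_or_neg x hx with ⟨c, -, rfl⟩ | ⟨c, -, rfl⟩
  · exact hsum c
  · exact Submodule.neg_mem _ (hsum c)

def simpleBasis : Module.Basis (Fin r) ℝ E :=
  Module.Basis.mk D.α_indep D.span_range_α.ge

lemma ext_inner_α {x y : E} (h : ∀ i, ⟪x, D.α i⟫ = ⟪y, D.α i⟫) : x = y :=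
  InnerProductSpace.ext_inner_right_basis D.simpleBasis fun i => by simpa [simpleBasis] using h i

lemma inner_ϖ_sum_smul_α (c : Fin r → ℝ) (j : Fin r) : ⟪D.ϖ j, ∑ i, c i • D.α i⟫ = c j := by
  simp [inner_sum, real_inner_smul_right, D.ϖ_pair]

lemma inner_sum_ϖ_sum_smul_α (c : Fin r → ℝ) : ⟪∑ i, D.ϖ i, ∑ i, c i • D.α i⟫ = ∑ i, c i := by
  simp only [sum_inner, inner_ϖ_sum_smul_α]

lemma inner_sum_ϖ_α (j : Fin r) : ⟪∑ i, D.ϖ i, D.α j⟫ = 1 := by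
  simp [sum_inner, D.ϖ_pair]

/-- Induction on the height `⟪∑ i, ϖ i, y⟫`: for `⟪α i, y⟫ > 0`, the reflection `s_i y` is
either a positive root of height lower by a positive integer, or negative, and then `y = α i`. -/
lemma mem_closure_α_of_mem_posRoots (N : ℕ) {y : E} (hy : y ∈ D.posRoots)
    (hN : ⟪∑ i, D.ϖ i, y⟫ < N) : y ∈ AddSubgroup.closure (Set.range D.α) := by
  induction N generalizing y with
  | zero =>
    obtain ⟨-, c, hc, rfl⟩ := hy
    rw [inner_sum_ϖ_sum_smul_α, Nat.cast_zero] at hN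
    exact absurd hN (Finset.sum_nonneg fun i _ => hc i).not_gt
  | succ N ih =>
    obtain ⟨hyΦ, c, hc, hyc⟩ := hy
    obtain ⟨i, -, hi⟩ : ∃ i ∈ Finset.univ, (0 : ℝ) < c i * ⟪D.α i, y⟫ := by
      refine Finset.exists_lt_of_sum_lt ?_
      conv_rhs => enter [2, j]; rw [← real_inner_smul_left]
      rw [Finset.sum_const_zero, ← sum_inner, ← hyc]
      exact real_inner_self_pos.mpr (D.root_ne_zero y hyΦ)
    obtain ⟨hci, hαy⟩ : 0 < c i ∧ 0 < ⟪D.α i, y⟫ :=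
      (pos_and_pos_or_neg_and_neg_of_mul_pos hi).resolve_right fun h => (hc i).not_gt h.1
    obtain ⟨m, hm⟩ := D.integrality _ (D.α_mem i) y hyΦ
    have hm1 : (1 : ℝ) ≤ m := by
      have hαα : (0 : ℝ) < ⟪D.α i, D.α i⟫ :=
        real_inner_self_pos.mpr (D.root_ne_zero _ (D.α_mem i))
      have : (0 : ℝ) < m := by rw [← hm, coroot, real_inner_smul_left]; positivity
      exact_mod_cast (Int.cast_pos.mp this : (0 : ℤ) < m)
    have hy' := D.reflect_mem _ (D.α_mem i) y hyΦ
    rw [hm] at hy'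
    rcases D.pos_or_neg _ hy' with hpos | ⟨c', hc', hyc'⟩
    · have hlow : ⟪∑ j, D.ϖ j, y - (m : ℝ) • D.α i⟫ < N := by
        rw [inner_sub_right, real_inner_smul_right, inner_sum_ϖ_α]
        push_cast at hN
        linarith
      have := add_mem (ih ⟨hy', hpos⟩ hlow)
        (zsmul_mem (AddSubgroup.subset_closure (Set.mem_range_self i)) m)
      rwa [← Int.cast_smul_eq_zsmul ℝ, sub_add_cancel] at this
    · have hzero : ∀ k ≠ i, c k = 0 := fun k hk => by
        have := congrArg (⟪D.ϖ k, ·⟫) hyc'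
        simp only [inner_sub_right, inner_neg_right, real_inner_smul_right, hyc,
          inner_ϖ_sum_smul_α, D.ϖ_pair, if_neg hk, mul_zero, sub_zero] at this
        linarith [hc k, hc' k]
      have hyi : y = c i • D.α i := by
        rw [hyc, Finset.sum_eq_single i (fun k _ hk => by rw [hzero k hk, zero_smul])
          (absurd (Finset.mem_univ i))]
      rcases D.reduced _ (D.α_mem i) (c i) (hyi ▸ hyΦ) with h | h
      · rw [hyi, h, one_smul]
        exact AddSubgroup.subset_closure ⟨i, rfl⟩
      · linarith

lemma mem_closure_α_of_mem_Φ {y : E} (hy : y ∈ D.Φ) :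
    y ∈ AddSubgroup.closure (Set.range D.α) := by
  have hpos : ∀ {z : E}, z ∈ D.posRoots → z ∈ AddSubgroup.closure (Set.range D.α) := fun hz =>
    D.mem_closure_α_of_mem_posRoots _ hz (exists_nat_gt _).choose_spec
  rcases D.pos_or_neg y hy with hc | ⟨c, hc, hyc⟩
  · exact hpos ⟨hy, hc⟩
  · exact neg_neg y ▸ neg_mem (hpos ⟨D.neg_mem_Φ hy, c, hc, neg_eq_iff_eq_neg.mpr hyc⟩)

end SimpleRoots

section IntegralCoweights

/-- The coweight lattice in its intrinsic form `{v | ⟪v, Φ⟫ ⊆ ℤ}`, which is visibly `W`-stable;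
it contains `P^∨` because every root is an integral combination of simple roots. -/
def integralCoweights : AddSubgroup E where
  carrier := {v | ∀ y ∈ D.Φ, ∃ m : ℤ, ⟪v, y⟫ = (m : ℝ)}
  zero_mem' := fun y _ => ⟨0, by simp⟩
  add_mem' := by
    rintro a b ha hb y hy
    obtain ⟨m, hm⟩ := ha y hy
    obtain ⟨m', hm'⟩ := hb y hy
    exact ⟨m + m', by rw [inner_add_left, hm, hm']; push_cast; ring⟩
  neg_mem' := by
    rintro a ha y hy
    obtain ⟨m, hm⟩ := ha y hy
    exact ⟨-m, by rw [inner_neg_left, hm]; push_cast; ring⟩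

lemma mem_integralCoweights_iff {v : E} :
    v ∈ D.integralCoweights ↔ ∀ i, ∃ m : ℤ, ⟪v, D.α i⟫ = (m : ℝ) := by
  refine ⟨fun hv i => hv _ (D.α_mem i), fun hv y hy => ?_⟩
  replace hy := D.mem_closure_α_of_mem_Φ hy
  induction hy using AddSubgroup.closure_induction with
  | mem x hx =>
    obtain ⟨i, rfl⟩ := hx
    exact hv i
  | zero => exact ⟨0, by simp⟩
  | add a b _ _ ha hb =>
    obtain ⟨m, hm⟩ := ha
    obtain ⟨m', hm'⟩ := hb
    exact ⟨m + m', by rw [inner_add_right, hm, hm']; push_cast; ring⟩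
  | neg a _ ha =>
    obtain ⟨m, hm⟩ := ha
    exact ⟨-m, by rw [inner_neg_right, hm]; push_cast; ring⟩

lemma coweightLattice_le_integralCoweights : D.coweightLattice ≤ D.integralCoweights := by
  rw [coweightLattice, AddSubgroup.closure_le]
  rintro v ⟨k, rfl⟩
  refine D.mem_integralCoweights_iff.mpr fun i => ⟨if k = i then 1 else 0, ?_⟩
  rw [D.ϖ_pair]
  split_ifs <;> simp

lemma refl_apply_mem_integralCoweights {x v : E} (hx : x ∈ D.Φ)
    (hv : v ∈ D.integralCoweights) : refl x v ∈ D.integralCoweights := fun y hy =>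
  inner_refl_left x v y ▸ hv _ (D.refl_mem_Φ hx hy)

lemma weylGroup_apply_mem_integralCoweights_iff {w : E ≃ᵃ[ℝ] E} (hw : w ∈ D.weylGroup)
    {v : E} : w v ∈ D.integralCoweights ↔ v ∈ D.integralCoweights := by
  induction hw using Subgroup.closure_induction generalizing v with
  | mem f hf =>
    obtain ⟨x, hx, rfl⟩ := hf
    refine ⟨fun h => ?_, D.refl_apply_mem_integralCoweights hx⟩
    simpa only [refl_refl] using D.refl_apply_mem_integralCoweights hx h
  | one => rfl
  | mul a b _ _ ha hb => exact ha.trans hb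
  | inv a _ ha => rw [← ha, AffineEquiv.inv_def, AffineEquiv.apply_symm_apply]

end IntegralCoweights

section AffineWeylGroups

lemma weylGroup_apply_zero {w : E ≃ᵃ[ℝ] E} (hw : w ∈ D.weylGroup) : w 0 = 0 := by
  induction hw using Subgroup.closure_induction with
  | mem f hf =>
    obtain ⟨x, -, rfl⟩ := hf
    exact map_zero (Submodule.reflection (ℝ ∙ x)ᗮ)
  | one => rfl
  | mul a b _ _ ha hb => rw [AffineEquiv.coe_mul, Function.comp_apply, hb, ha]
  | inv a _ ha => rw [AffineEquiv.inv_def, AffineEquiv.symm_apply_eq, ha]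

lemma weylGroup_apply_add {w : E ≃ᵃ[ℝ] E} (hw : w ∈ D.weylGroup) (a b : E) :
    w (a + b) = w a + w b := by
  have hlin : ∀ v, w v = w.linear v := fun v => by
    simpa [D.weylGroup_apply_zero hw] using (w.toAffineMap.linearMap_vsub v 0).symm
  rw [hlin, hlin a, hlin b, map_add]

lemma transl_apply (v x : E) : transl v x = v + x := rfl

lemma transl_mem_affWeylOf {Λ : AddSubgroup E} {v : E} (hv : v ∈ Λ) :
    transl v ∈ D.affWeylOf Λ :=
  Subgroup.subset_closure (Or.inl ⟨v, hv, rfl⟩)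

lemma weylGroup_le_affWeylOf (Λ : AddSubgroup E) : D.weylGroup ≤ D.affWeylOf Λ :=
  Subgroup.closure_mono Set.subset_union_right

lemma exists_eq_transl_mul_of_mem_affWeylOf {Λ : AddSubgroup E}
    (hΛ : ∀ w ∈ D.weylGroup, ∀ v ∈ Λ, w v ∈ Λ) {g : E ≃ᵃ[ℝ] E} (hg : g ∈ D.affWeylOf Λ) :
    g 0 ∈ Λ ∧ ∃ w ∈ D.weylGroup, g = transl (g 0) * w := by
  suffices h : ∃ p ∈ Λ, ∃ w ∈ D.weylGroup, g = transl p * w by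
    obtain ⟨p, hp, w, hw, rfl⟩ := h
    have h0 : (transl p * w) 0 = p := by
      rw [AffineEquiv.coe_mul, Function.comp_apply, D.weylGroup_apply_zero hw, transl_apply,
        add_zero]
    exact ⟨h0.symm ▸ hp, w, hw, by rw [h0]⟩
  induction hg using Subgroup.closure_induction with
  | mem f hf =>
    rcases hf with ⟨v, hv, rfl⟩ | ⟨x, hx, rfl⟩
    · exact ⟨v, hv, 1, one_mem _, (mul_one _).symm⟩
    · exact ⟨0, zero_mem _, refl x, Subgroup.subset_closure ⟨x, hx, rfl⟩,
        by rw [transl_zero, one_mul]⟩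
  | one => exact ⟨0, zero_mem _, 1, one_mem _, by rw [transl_zero, one_mul]⟩
  | mul a b _ _ ha hb =>
    obtain ⟨p, hp, w, hw, rfl⟩ := ha
    obtain ⟨q, hq, u, hu, rfl⟩ := hb
    refine ⟨p + w q, add_mem hp (hΛ w hw q hq), w * u, mul_mem hw hu, AffineEquiv.ext fun x => ?_⟩
    change p + w (q + u x) = (p + w q) + w (u x)
    rw [D.weylGroup_apply_add hw, add_assoc]
  | inv a _ ha =>
    obtain ⟨p, hp, w, hw, rfl⟩ := ha
    refine ⟨w⁻¹ (-p), hΛ _ (inv_mem hw) _ (neg_mem hp), w⁻¹, inv_mem hw,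
      inv_eq_of_mul_eq_one_right (AffineEquiv.ext fun x => ?_)⟩
    change p + w (w⁻¹ (-p) + w⁻¹ x) = x
    rw [D.weylGroup_apply_add hw, AffineEquiv.inv_def, AffineEquiv.apply_symm_apply,
      AffineEquiv.apply_symm_apply, add_neg_cancel_left]

lemma extAffWeyl_le_affWeylOf_integralCoweights :
    D.extAffWeyl ≤ D.affWeylOf D.integralCoweights :=
  Subgroup.closure_mono <| Set.union_subset_union_left _ <| by
    rintro f ⟨v, hv, rfl⟩
    exact ⟨v, D.coweightLattice_le_integralCoweights hv, rfl⟩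

lemma exists_eq_transl_mul_of_mem_extAffWeyl {g : E ≃ᵃ[ℝ] E} (hg : g ∈ D.extAffWeyl) :
    g 0 ∈ D.integralCoweights ∧ ∃ w ∈ D.weylGroup, g = transl (g 0) * w :=
  D.exists_eq_transl_mul_of_mem_affWeylOf
    (fun _ hw _ => (D.weylGroup_apply_mem_integralCoweights_iff hw).mpr)
    (D.extAffWeyl_le_affWeylOf_integralCoweights hg)

lemma inv_mul_mem_affWeylOf {Y : AddSubgroup E} {g g' : E ≃ᵃ[ℝ] E} (hg : g ∈ D.extAffWeyl)
    (hg' : g' ∈ D.extAffWeyl) (h : g 0 - g' 0 ∈ Y) : g'⁻¹ * g ∈ D.affWeylOf Y := by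
  obtain ⟨-, w, hw, hgw⟩ := D.exists_eq_transl_mul_of_mem_extAffWeyl hg
  obtain ⟨-, w', hw', hgw'⟩ := D.exists_eq_transl_mul_of_mem_extAffWeyl hg'
  have : g'⁻¹ * g = w'⁻¹ * (transl (g 0 - g' 0) * w) := by
    conv_lhs => rw [hgw, hgw']
    rw [mul_inv_rev, mul_assoc, ← mul_assoc _ (transl (g 0)), sub_eq_neg_add, transl_add,
      transl_neg]
  rw [this]
  exact mul_mem (inv_mem (D.weylGroup_le_affWeylOf Y hw'))
    (mul_mem (D.transl_mem_affWeylOf h) (D.weylGroup_le_affWeylOf Y hw))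

end AffineWeylGroups

section Alcove

lemma inner_α₀_eq_sum (x : E) : ⟪x, D.α₀⟫ = ∑ i, (D.n i : ℝ) * ⟪x, D.α i⟫ := by
  simp only [D.α₀_eq, inner_sum, real_inner_smul_right]

lemma n_mul_inner_α_add_le_inner_α₀ {x : E} (hx : x ∈ D.alcove) {i j : Fin r} (hij : i ≠ j) :
    D.n i * ⟪x, D.α i⟫ + D.n j * ⟪x, D.α j⟫ ≤ ⟪x, D.α₀⟫ := by
  rw [inner_α₀_eq_sum]
  exact Finset.add_le_sum (fun k _ => mul_nonneg (Nat.cast_nonneg _) (hx.1 k))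
    (Finset.mem_univ i) (Finset.mem_univ j) hij

lemma n_mul_inner_α_le_inner_α₀ {x : E} (hx : x ∈ D.alcove) (i : Fin r) :
    D.n i * ⟪x, D.α i⟫ ≤ ⟪x, D.α₀⟫ := by
  rw [inner_α₀_eq_sum]
  exact Finset.single_le_sum (f := fun k => (D.n k : ℝ) * ⟪x, D.α k⟫)
    (fun k _ => mul_nonneg (Nat.cast_nonneg _) (hx.1 k)) (Finset.mem_univ i)

lemma one_le_n (i : Fin r) : (1 : ℝ) ≤ D.n i := by
  exact_mod_cast D.n_pos i

lemma inner_α_le_one {x : E} (hx : x ∈ D.alcove) (i : Fin r) : ⟪x, D.α i⟫ ≤ 1 :=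
  calc ⟪x, D.α i⟫ ≤ D.n i * ⟪x, D.α i⟫ := le_mul_of_one_le_left (hx.1 i) (D.one_le_n i)
    _ ≤ ⟪x, D.α₀⟫ := D.n_mul_inner_α_le_inner_α₀ hx i
    _ ≤ 1 := hx.2

lemma inner_α_eq_zero_of_inner_α_eq_one {x : E} (hx : x ∈ D.alcove) {i j : Fin r}
    (hj : ⟪x, D.α j⟫ = 1) (hij : i ≠ j) : ⟪x, D.α i⟫ = 0 := by
  have h := D.n_mul_inner_α_add_le_inner_α₀ hx hij
  rw [hj, mul_one] at h
  have : D.n i * ⟪x, D.α i⟫ ≤ 0 := by linarith [hx.2, D.one_le_n j]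
  exact le_antisymm (nonpos_of_mul_nonpos_right this (by linarith [D.one_le_n i])) (hx.1 i)

lemma mem_integralCoweights_of_inner_sub_eq_one {x x' : E} (hx : x ∈ D.alcove)
    (hx' : x' ∈ D.alcove) {j : Fin r} (hj : ⟪x, D.α j⟫ - ⟪x', D.α j⟫ = 1) :
    x ∈ D.integralCoweights := by
  have hj1 : ⟪x, D.α j⟫ = 1 := le_antisymm (D.inner_α_le_one hx j) (by linarith [hx'.1 j])
  refine D.mem_integralCoweights_iff.mpr fun i => ?_
  rcases eq_or_ne i j with rfl | hij
  · exact ⟨1, by rw [hj1, Int.cast_one]⟩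
  · exact ⟨0, by rw [D.inner_α_eq_zero_of_inner_α_eq_one hx hj1 hij, Int.cast_zero]⟩

lemma eq_or_mem_of_sub_mem_integralCoweights {x x' : E} (hx : x ∈ D.alcove)
    (hx' : x' ∈ D.alcove) (h : x - x' ∈ D.integralCoweights) :
    x = x' ∨ x ∈ D.integralCoweights ∧ x' ∈ D.integralCoweights := by
  by_cases heq : x = x'
  · exact Or.inl heq
  right
  obtain ⟨j, hj⟩ : ∃ j, ⟪x - x', D.α j⟫ ≠ 0 := by
    by_contra! h0
    exact heq (sub_eq_zero.mp (D.ext_inner_α fun i => by rw [h0 i, inner_zero_left]))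
  obtain ⟨m, hm⟩ := D.mem_integralCoweights_iff.mp h j
  rw [inner_sub_left] at hm hj
  have hm_le : (m : ℝ) ≤ 1 := by linarith [D.inner_α_le_one hx j, hx'.1 j]
  have hm_ge : (-1 : ℝ) ≤ m := by linarith [D.inner_α_le_one hx' j, hx.1 j]
  have hm0 : m ≠ 0 := by rintro rfl; exact hj (by rw [hm, Int.cast_zero])
  have : m = 1 ∨ m = -1 := by
    have : m ≤ 1 := by exact_mod_cast hm_le
    have : -1 ≤ m := by exact_mod_cast hm_ge
    omega
  rcases this with rfl | rfl
  · have hxP := D.mem_integralCoweights_of_inner_sub_eq_one hx hx' (by rw [hm, Int.cast_one])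
    exact ⟨hxP, by simpa using sub_mem hxP h⟩
  · have hxP' := D.mem_integralCoweights_of_inner_sub_eq_one hx' hx
      (by rw [← neg_sub, hm]; push_cast; ring)
    exact ⟨by simpa using add_mem h hxP', hxP'⟩

/-- Besides `0`, the points of the alcove in `P^∨` are the `ϖ j` with `n j = 1`, and
`⟪ϖ j, α₀ + α j⟫ = 2`. -/
lemma eq_zero_of_mem_KP_of_mem_integralCoweights {x : E} (hx : x ∈ D.KP)
    (hxP : x ∈ D.integralCoweights) : x = 0 := by
  refine D.ext_inner_α fun i => ?_
  rw [inner_zero_left]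
  by_contra hne
  obtain ⟨m, hm⟩ := D.mem_integralCoweights_iff.mp hxP i
  have hi1 : ⟪x, D.α i⟫ = 1 := by
    have h0 : (0 : ℝ) < m := hm ▸ lt_of_le_of_ne (hx.1.1 i) (Ne.symm hne)
    have h1 : (1 : ℝ) ≤ m := by exact_mod_cast (Int.cast_pos.mp h0 : (0 : ℤ) < m)
    exact le_antisymm (D.inner_α_le_one hx.1 i) (hm ▸ h1)
  have hn : D.n i * ⟪x, D.α i⟫ ≤ ⟪x, D.α₀⟫ := D.n_mul_inner_α_le_inner_α₀ hx.1 i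
  rw [hi1, mul_one] at hn
  have hni : D.n i = 1 := by
    have : (D.n i : ℝ) ≤ 1 := hn.trans hx.1.2
    exact le_antisymm (by exact_mod_cast this) (D.n_pos i)
  have hKP := hx.2 i hni
  rw [inner_add_right, hi1] at hKP
  linarith [D.one_le_n i]

lemma apply_mem_alcove {g : E ≃ᵃ[ℝ] E} (hg : g ∈ D.alcoveStab) {x : E} (hx : x ∈ D.alcove) :
    g x ∈ D.alcove :=
  hg.2 ▸ Set.mem_image_of_mem g hx

lemma eq_zero_of_mem_KP_of_apply_mem {g : E ≃ᵃ[ℝ] E} (hg : g ∈ D.extAffWeyl) {x : E}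
    (hx : x ∈ D.KP) (hgx : g x ∈ D.integralCoweights) : x = 0 := by
  obtain ⟨hg0, w, hw, hgw⟩ := D.exists_eq_transl_mul_of_mem_extAffWeyl hg
  have hgx' : g x = g 0 + w x := congrArg (· x) hgw
  refine D.eq_zero_of_mem_KP_of_mem_integralCoweights hx
    ((D.weylGroup_apply_mem_integralCoweights_iff hw).mp ?_)
  rw [eq_sub_of_add_eq' hgx'.symm]
  exact sub_mem hgx hg0

end Alcove

end KPData

/-- For a W-lattice `Y` with associated subgroup `Ω_Y ≤ Ω` and any set `R`
of coset representatives for `Ω/Ω_Y`, two points of `F_Y = ⋃_{ρ∈R} ρF` that are congruent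
modulo `Y` coincide. -/
theorem FY_injective_mod_Y (D : KPData E r) (Y : AddSubgroup E) (hY : D.IsWLattice Y)
    (R : Set (E ≃ᵃ[ℝ] E)) (hR : R ⊆ D.alcoveStab)
    (hreps : ∀ ω ∈ D.alcoveStab, ∃! ρ : E ≃ᵃ[ℝ] E, ρ ∈ R ∧ ρ⁻¹ * ω ∈ D.OmegaOf Y)
    (lam lam' : E)
    (hlam : lam ∈ ⋃ ρ ∈ R, ⇑ρ '' D.KP) (hlam' : lam' ∈ ⋃ ρ ∈ R, ⇑ρ '' D.KP)
    (h : lam - lam' ∈ Y) : lam = lam' := by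
  simp only [Set.mem_iUnion, Set.mem_image] at hlam hlam'
  obtain ⟨ρ, hρR, μ, hμ, rfl⟩ := hlam
  obtain ⟨ρ', hρ'R, μ', hμ', rfl⟩ := hlam'
  have hρ := hR hρR
  have hρ' := hR hρ'R
  rcases D.eq_or_mem_of_sub_mem_integralCoweights (D.apply_mem_alcove hρ hμ.1)
      (D.apply_mem_alcove hρ' hμ'.1) (D.coweightLattice_le_integralCoweights (hY.2.1 h))
    with heq | ⟨hP, hP'⟩
  · exact heq
  obtain rfl := D.eq_zero_of_mem_KP_of_apply_mem hρ.1 hμ hP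
  obtain rfl := D.eq_zero_of_mem_KP_of_apply_mem hρ'.1 hμ' hP'
  have hΩY : ρ'⁻¹ * ρ ∈ D.OmegaOf Y :=
    Subgroup.mem_inf.mpr ⟨D.inv_mul_mem_affWeylOf hρ.1 hρ'.1 h, mul_mem (inv_mem hρ') hρ⟩
  rw [(hreps ρ hρ).unique ⟨hρR, by rw [inv_mul_cancel]; exact one_mem _⟩ ⟨hρ'R, hΩY⟩]
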